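/- For any discount factor λ ∈ (0,1) ∩ ℚ, the discounted-sum value function DSum_λ(v) = Σ_{i≥0} λ^i v_i is discounting: for every finite V ⊂ ℚ and ε > 0 there exists n ∈ ℕ such that for all x ∈ V^n and y, y' ∈ V^ω, |DSum_λ(x·y) − DSum_λ(x·y')| < ε. Consequently DSum_λ is both safe and co-safe. -/

import Mathlib

/-- Concatenation of a finite sequence `u` with an infinite sequence `w`. -/
def seqCat {A : Type*} (u : List A) (w : ℕ → A) : ℕ → A :=
  fun i => if h : i < u.length then u.get ⟨i, h⟩ else w (i - u.length)

/-- The finite prefix of length `n` of an infinite sequence `w`. -/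
def seqPre {A : Type*} (w : ℕ → A) (n : ℕ) : List A :=
  List.ofFn (fun i : Fin n => w i)

/-- The discounted-sum value function with discount factor `lam`. -/
noncomputable def DSumVal (lam : ℚ) (x : ℕ → ℚ) : ℝ :=
  ∑' i : ℕ, (lam : ℝ) ^ i * (x i : ℝ)

/-- Discounting for value functions. -/
def DiscountingVal (Val : (ℕ → ℚ) → ℝ) : Prop :=
  ∀ V : Finset ℚ, ∀ ε : ℝ, 0 < ε → ∃ n : ℕ, ∀ z : List ℚ, z.length = n →
    (∀ q ∈ z, q ∈ V) → ∀ y y' : ℕ → ℚ, (∀ i, y i ∈ V) → (∀ i, y' i ∈ V) →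
      |Val (seqCat z y) - Val (seqCat z y')| < ε

/-- Safety for value functions. -/
def SafeVal (Val : (ℕ → ℚ) → ℝ) : Prop :=
  ∀ V : Finset ℚ, ∀ x : ℕ → ℚ, (∀ i, x i ∈ V) → ∀ v : ℝ, Val x < v →
    ∃ n : ℕ, sSup {r : ℝ | ∃ y : ℕ → ℚ, (∀ i, y i ∈ V) ∧
      r = Val (seqCat (seqPre x n) y)} < v

/-- Co-safety for value functions. -/
def CosafeVal (Val : (ℕ → ℚ) → ℝ) : Prop :=
  ∀ V : Finset ℚ, ∀ x : ℕ → ℚ, (∀ i, x i ∈ V) → ∀ v : ℝ, v < Val x →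
    ∃ n : ℕ, v < sInf {r : ℝ | ∃ y : ℕ → ℚ, (∀ i, y i ∈ V) ∧
      r = Val (seqCat (seqPre x n) y)}

/-! ### Auxiliary lemmas -/

lemma summable_dsum (lam : ℚ) (h0 : 0 < lam) (h1 : lam < 1) (M : ℝ)
    (x : ℕ → ℚ) (hx : ∀ i, |(x i : ℝ)| ≤ M) :
    Summable (fun i => (lam : ℝ) ^ i * (x i : ℝ)) := by
  have h0' : (0 : ℝ) ≤ (lam : ℝ) := by exact_mod_cast h0.le
  have h1' : (lam : ℝ) < 1 := by exact_mod_cast h1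
  refine Summable.of_norm_bounded
    ((summable_geometric_of_lt_one h0' h1').mul_left M) (fun i => ?_)
  rw [Real.norm_eq_abs, abs_mul, abs_pow, abs_of_nonneg h0']
  calc (lam : ℝ) ^ i * |(x i : ℝ)| ≤ (lam : ℝ) ^ i * M :=
        mul_le_mul_of_nonneg_left (hx i) (pow_nonneg h0' i)
    _ = M * (lam : ℝ) ^ i := mul_comm _ _

lemma abs_dsum_le (lam : ℚ) (h0 : 0 < lam) (h1 : lam < 1) (M : ℝ)
    (x : ℕ → ℚ) (hx : ∀ i, |(x i : ℝ)| ≤ M) :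
    |DSumVal lam x| ≤ M * (1 - (lam : ℝ))⁻¹ := by
  have h0' : (0 : ℝ) ≤ (lam : ℝ) := by exact_mod_cast h0.le
  have h1' : (lam : ℝ) < 1 := by exact_mod_cast h1
  have hM : (0 : ℝ) ≤ M := le_trans (abs_nonneg _) (hx 0)
  have hsum := summable_dsum lam h0 h1 M x hx
  have hg : Summable (fun i => M * (lam : ℝ) ^ i) :=
    (summable_geometric_of_lt_one h0' h1').mul_left M
  have hnorm : Summable (fun i => ‖(lam : ℝ) ^ i * (x i : ℝ)‖) := hsum.abs
  calc |DSumVal lam x| ≤ ∑' i, ‖(lam : ℝ) ^ i * (x i : ℝ)‖ :=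
        norm_tsum_le_tsum_norm hnorm
    _ ≤ ∑' i, M * (lam : ℝ) ^ i := by
        refine Summable.tsum_le_tsum (fun i => ?_) hnorm hg
        rw [Real.norm_eq_abs, abs_mul, abs_pow, abs_of_nonneg h0']
        calc (lam : ℝ) ^ i * |(x i : ℝ)| ≤ (lam : ℝ) ^ i * M :=
              mul_le_mul_of_nonneg_left (hx i) (pow_nonneg h0' i)
          _ = M * (lam : ℝ) ^ i := mul_comm _ _
    _ = M * (1 - (lam : ℝ))⁻¹ := by
        rw [tsum_mul_left, tsum_geometric_of_lt_one h0' h1']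

lemma seqCat_bound (M : ℝ) (z : List ℚ) (w : ℕ → ℚ)
    (hz : ∀ q ∈ z, |(q : ℝ)| ≤ M) (hw : ∀ i, |(w i : ℝ)| ≤ M) :
    ∀ i, |((seqCat z w i : ℚ) : ℝ)| ≤ M := by
  intro i
  unfold seqCat
  by_cases h : i < z.length
  · rw [dif_pos h]
    exact hz _ (z.get_mem ⟨i, h⟩)
  · rw [dif_neg h]
    exact hw _

lemma dsum_cat_eq (lam : ℚ) (h0 : 0 < lam) (h1 : lam < 1) (M : ℝ)
    (z : List ℚ) (w : ℕ → ℚ)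
    (hz : ∀ q ∈ z, |(q : ℝ)| ≤ M) (hw : ∀ i, |(w i : ℝ)| ≤ M) :
    DSumVal lam (seqCat z w) =
      (∑ i ∈ Finset.range z.length, (lam : ℝ) ^ i * ((seqCat z w i : ℚ) : ℝ))
        + (lam : ℝ) ^ z.length * DSumVal lam w := by
  have hcb := seqCat_bound M z w hz hw
  have hs := summable_dsum lam h0 h1 M (seqCat z w) hcb
  unfold DSumVal
  rw [← Summable.sum_add_tsum_nat_add z.length hs]
  congr 1
  have hshift : ∀ i : ℕ,
      (lam : ℝ) ^ (i + z.length) * ((seqCat z w (i + z.length) : ℚ) : ℝ)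
        = (lam : ℝ) ^ z.length * ((lam : ℝ) ^ i * ((w i : ℚ) : ℝ)) := by
    intro i
    have hcw : seqCat z w (i + z.length) = w i := by
      unfold seqCat
      rw [dif_neg (by omega)]
      congr 1
      omega
    rw [hcw, pow_add]
    ring
  simp_rw [hshift]
  rw [tsum_mul_left]

lemma dsum_cat_sub (lam : ℚ) (h0 : 0 < lam) (h1 : lam < 1) (M : ℝ)
    (z : List ℚ) (y y' : ℕ → ℚ)
    (hz : ∀ q ∈ z, |(q : ℝ)| ≤ M) (hy : ∀ i, |(y i : ℝ)| ≤ M)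
    (hy' : ∀ i, |(y' i : ℝ)| ≤ M) :
    DSumVal lam (seqCat z y) - DSumVal lam (seqCat z y')
      = (lam : ℝ) ^ z.length * (DSumVal lam y - DSumVal lam y') := by
  rw [dsum_cat_eq lam h0 h1 M z y hz hy, dsum_cat_eq lam h0 h1 M z y' hz hy']
  have hsums : (∑ i ∈ Finset.range z.length, (lam : ℝ) ^ i * ((seqCat z y i : ℚ) : ℝ))
      = ∑ i ∈ Finset.range z.length, (lam : ℝ) ^ i * ((seqCat z y' i : ℚ) : ℝ) := by
    refine Finset.sum_congr rfl (fun i hi => ?_)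
    have hi' : i < z.length := Finset.mem_range.mp hi
    unfold seqCat
    rw [dif_pos hi', dif_pos hi']
  rw [hsums]
  ring

lemma seqCat_seqPre (x : ℕ → ℚ) (n : ℕ) :
    seqCat (seqPre x n) (fun i => x (i + n)) = x := by
  funext i
  unfold seqCat seqPre
  by_cases h : i < (List.ofFn fun i : Fin n => x i).length
  · rw [dif_pos h]
    simp
  · rw [dif_neg h]
    simp only [List.length_ofFn] at h ⊢
    congr 1
    omega

/-- For any rational discount factor `lam ∈ (0,1)`, the discounted-sum value
function is discounting, and consequently both safe and co-safe. -/
theorem dsum_discounting_safe_cosafe (lam : ℚ) (h0 : 0 < lam) (h1 : lam < 1) :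
    DiscountingVal (DSumVal lam) ∧ SafeVal (DSumVal lam) ∧ CosafeVal (DSumVal lam) := by
  have h0' : (0 : ℝ) < (lam : ℝ) := by exact_mod_cast h0
  have h1' : (lam : ℝ) < 1 := by exact_mod_cast h1
  have hD : DiscountingVal (DSumVal lam) := by
    intro V ε hε
    set M : ℝ := ((∑ q ∈ V, |q| : ℚ) : ℝ) with hMdef
    have hmem : ∀ q ∈ V, |(q : ℝ)| ≤ M := by
      intro q hq
      have : |q| ≤ ∑ p ∈ V, |p| :=
        Finset.single_le_sum (fun p _ => abs_nonneg p) hq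
      rw [hMdef]
      push_cast
      exact_mod_cast this
    set C : ℝ := 2 * M * (1 - (lam : ℝ))⁻¹ + 1 with hCdef
    have hMnonneg : 0 ≤ M := by
      rw [hMdef]
      exact_mod_cast Finset.sum_nonneg (fun p _ => abs_nonneg p)
    have hCpos : 0 < C := by
      have hinv : (0:ℝ) ≤ (1 - (lam : ℝ))⁻¹ := inv_nonneg.mpr (by linarith)
      have h2 : 0 ≤ 2 * M * (1 - (lam : ℝ))⁻¹ := mul_nonneg (by linarith) hinv
      rw [hCdef]
      linarith
    obtain ⟨n, hn⟩ := exists_pow_lt_of_lt_one (div_pos hε hCpos) h1'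
    refine ⟨n, fun z hzlen hzV y y' hy hy' => ?_⟩
    have hzb : ∀ q ∈ z, |(q : ℝ)| ≤ M := fun q hq => hmem q (hzV q hq)
    have hyb : ∀ i, |(y i : ℝ)| ≤ M := fun i => hmem _ (hy i)
    have hy'b : ∀ i, |(y' i : ℝ)| ≤ M := fun i => hmem _ (hy' i)
    rw [dsum_cat_sub lam h0 h1 M z y y' hzb hyb hy'b]
    have hbd : |DSumVal lam y - DSumVal lam y'| ≤ 2 * M * (1 - (lam : ℝ))⁻¹ := by
      calc |DSumVal lam y - DSumVal lam y'| ≤ |DSumVal lam y| + |DSumVal lam y'| :=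
            abs_sub _ _
        _ ≤ M * (1 - (lam : ℝ))⁻¹ + M * (1 - (lam : ℝ))⁻¹ :=
            add_le_add (abs_dsum_le lam h0 h1 M y hyb) (abs_dsum_le lam h0 h1 M y' hy'b)
        _ = 2 * M * (1 - (lam : ℝ))⁻¹ := by ring
    have hpow : (0 : ℝ) ≤ (lam : ℝ) ^ z.length := pow_nonneg h0'.le _
    calc |(lam : ℝ) ^ z.length * (DSumVal lam y - DSumVal lam y')|
        = (lam : ℝ) ^ z.length * |DSumVal lam y - DSumVal lam y'| := by
          rw [abs_mul, abs_pow, abs_of_nonneg h0'.le]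
      _ ≤ (lam : ℝ) ^ z.length * C := by
          refine mul_le_mul_of_nonneg_left ?_ hpow
          rw [hCdef]; linarith
      _ = (lam : ℝ) ^ n * C := by rw [hzlen]
      _ < (ε / C) * C := by
          exact mul_lt_mul_of_pos_right hn hCpos
      _ = ε := by field_simp
  refine ⟨hD, ?_, ?_⟩
  · -- SafeVal
    intro V x hx v hv
    set ε : ℝ := (v - DSumVal lam x) / 2 with hεdef
    have hε : 0 < ε := by rw [hεdef]; linarith
    obtain ⟨n, hn⟩ := hD V ε hε
    refine ⟨n, ?_⟩
    have hSne : {r : ℝ | ∃ y : ℕ → ℚ, (∀ i, y i ∈ V) ∧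
        r = DSumVal lam (seqCat (seqPre x n) y)}.Nonempty :=
      ⟨_, fun _ => x 0, fun _ => hx 0, rfl⟩
    have hzlen : (seqPre x n).length = n := by
      unfold seqPre; simp
    have hzV : ∀ q ∈ seqPre x n, q ∈ V := by
      intro q hq
      unfold seqPre at hq
      obtain ⟨i, hi⟩ := List.mem_ofFn.mp hq
      exact hi ▸ hx i
    have hub : ∀ r ∈ {r : ℝ | ∃ y : ℕ → ℚ, (∀ i, y i ∈ V) ∧
        r = DSumVal lam (seqCat (seqPre x n) y)}, r ≤ DSumVal lam x + ε := by
      rintro r ⟨y, hy, rfl⟩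
      have := hn (seqPre x n) hzlen hzV y (fun i => x (i + n)) hy (fun i => hx (i + n))
      rw [seqCat_seqPre x n] at this
      have := abs_lt.mp this
      linarith [this.2]
    have := csSup_le hSne hub
    have hlt : DSumVal lam x + ε < v := by rw [hεdef]; linarith
    exact lt_of_le_of_lt this hlt
  · -- CosafeVal
    intro V x hx v hv
    set ε : ℝ := (DSumVal lam x - v) / 2 with hεdef
    have hε : 0 < ε := by rw [hεdef]; linarith
    obtain ⟨n, hn⟩ := hD V ε hε
    refine ⟨n, ?_⟩
    have hSne : {r : ℝ | ∃ y : ℕ → ℚ, (∀ i, y i ∈ V) ∧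
        r = DSumVal lam (seqCat (seqPre x n) y)}.Nonempty :=
      ⟨_, fun _ => x 0, fun _ => hx 0, rfl⟩
    have hzlen : (seqPre x n).length = n := by
      unfold seqPre; simp
    have hzV : ∀ q ∈ seqPre x n, q ∈ V := by
      intro q hq
      unfold seqPre at hq
      obtain ⟨i, hi⟩ := List.mem_ofFn.mp hq
      exact hi ▸ hx i
    have hlb : ∀ r ∈ {r : ℝ | ∃ y : ℕ → ℚ, (∀ i, y i ∈ V) ∧
        r = DSumVal lam (seqCat (seqPre x n) y)}, DSumVal lam x - ε ≤ r := by
      rintro r ⟨y, hy, rfl⟩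
      have := hn (seqPre x n) hzlen hzV y (fun i => x (i + n)) hy (fun i => hx (i + n))
      rw [seqCat_seqPre x n] at this
      have := abs_lt.mp this
      linarith [this.1]
    have := le_csInf hSne hlb
    have hlt : v < DSumVal lam x - ε := by rw [hεdef]; linarith
    exact lt_of_lt_of_le hlt this
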